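/- The series Σ_{n=1}^∞ E[exp(−[S_n]^+)] converges (i.e. there is a finite constant a_3 with Σ_{n=1}^∞ E[exp(−[S_n]^+)] ≤ a_3). -/

import Mathlib

/-!
Chernoff bound at `t = -1/2`: since `exp (-[s]⁺) ≤ exp (-s/2)`, the `n`-th term is at most
`E[exp (-Sₙ/2)] = ρⁿ`, where `ρ = E[exp (-i(X;Y)/2)] = Σₓ P_X(x) Σ_y √(W(y|x) P_Y(y))` is an
average of Bhattacharyya coefficients between `W(·|x)` and `P_Y`. The Hellinger identity
`1 - Σ √(p q) = ½ Σ (√p - √q)²` shows `ρ < 1` as soon as some `W(·|x)` differs from `P_Y`,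
which `C > 0` forces; so the series is dominated by a geometric one.
-/

open MeasureTheory ProbabilityTheory

/-- Output marginal `P_Y(y) = Σ_x P_X(x) W(y|x)`. -/
noncomputable def outDist {𝒳 𝒴 : Type*} [Fintype 𝒳] (pX : 𝒳 → ℝ) (W : 𝒳 → 𝒴 → ℝ)
    (y : 𝒴) : ℝ := ∑ x, pX x * W x y

/-- Information density `i(x;y) = log (W(y|x) / P_Y(y))`. -/
noncomputable def infoDen {𝒳 𝒴 : Type*} [Fintype 𝒳] (pX : 𝒳 → ℝ) (W : 𝒳 → 𝒴 → ℝ)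
    (x : 𝒳) (y : 𝒴) : ℝ := Real.log (W x y / outDist pX W y)

open Finset Real

section Bhattacharyya

variable {ι : Type*} [Fintype ι] {p q : ι → ℝ}

theorem one_sub_sum_sqrt_mul (hp : ∀ i, 0 ≤ p i) (hq : ∀ i, 0 ≤ q i)
    (hp1 : ∑ i, p i = 1) (hq1 : ∑ i, q i = 1) :
    1 - ∑ i, √(p i * q i) = ∑ i, (√(p i) - √(q i)) ^ 2 / 2 := by
  have hterm : ∀ i, (√(p i) - √(q i)) ^ 2 / 2 = (p i + q i) / 2 - √(p i * q i) := fun i => by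
    rw [sqrt_mul (hp i)]
    nlinarith [sq_sqrt (hp i), sq_sqrt (hq i)]
  simp only [hterm, sum_sub_distrib, ← sum_div, sum_add_distrib, hp1, hq1]
  norm_num

theorem sum_sqrt_mul_le_one (hp : ∀ i, 0 ≤ p i) (hq : ∀ i, 0 ≤ q i)
    (hp1 : ∑ i, p i = 1) (hq1 : ∑ i, q i = 1) : ∑ i, √(p i * q i) ≤ 1 := by
  have := one_sub_sum_sqrt_mul hp hq hp1 hq1
  have : 0 ≤ ∑ i, (√(p i) - √(q i)) ^ 2 / 2 := sum_nonneg fun i _ => by positivity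
  linarith

theorem sum_sqrt_mul_lt_one (hp : ∀ i, 0 ≤ p i) (hq : ∀ i, 0 ≤ q i)
    (hp1 : ∑ i, p i = 1) (hq1 : ∑ i, q i = 1) (hpq : ∃ i, p i ≠ q i) :
    ∑ i, √(p i * q i) < 1 := by
  obtain ⟨i, hi⟩ := hpq
  have hsqrt : √(p i) - √(q i) ≠ 0 := sub_ne_zero.2 fun h => hi ((sqrt_inj (hp i) (hq i)).1 h)
  have := one_sub_sum_sqrt_mul hp hq hp1 hq1
  have : 0 < ∑ i, (√(p i) - √(q i)) ^ 2 / 2 :=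
    sum_pos' (fun i _ => by positivity) ⟨i, mem_univ i, by positivity⟩
  linarith

end Bhattacharyya

section Channel

variable {𝒳 𝒴 : Type*} [Fintype 𝒳] {pX : 𝒳 → ℝ} {W : 𝒳 → 𝒴 → ℝ}

theorem outDist_pos [Nonempty 𝒳] (hpX : ∀ x, 0 < pX x) (hW : ∀ x y, 0 < W x y) (y : 𝒴) :
    0 < outDist pX W y :=
  sum_pos (fun x _ => mul_pos (hpX x) (hW x y)) univ_nonempty

theorem sum_outDist [Fintype 𝒴] (hpX : ∑ x, pX x = 1) (hW : ∀ x, ∑ y, W x y = 1) :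
    ∑ y, outDist pX W y = 1 := by
  simp only [outDist]
  rw [sum_comm]
  simp only [← mul_sum, hW, mul_one, hpX]

theorem exists_ne_outDist [Fintype 𝒴] (hC : 0 < ∑ x, ∑ y, pX x * W x y * infoDen pX W x y) :
    ∃ x y, W x y ≠ outDist pX W y := by
  by_contra! h
  simp [infoDen, h] at hC

theorem mul_exp_neg_half_infoDen {x : 𝒳} {y : 𝒴} (hW : 0 < W x y) (hP : 0 < outDist pX W y) :
    W x y * exp (-(1 / 2) * infoDen pX W x y) = √(W x y * outDist pX W y) := by
  have hexp : exp (-(1 / 2) * infoDen pX W x y) = √(outDist pX W y / W x y) := by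
    rw [sqrt_eq_rpow, ← exp_log (div_pos hP hW), ← exp_mul, infoDen, log_div hW.ne' hP.ne',
      log_div hP.ne' hW.ne']
    ring_nf
  rw [hexp, ← sqrt_sq hW.le, ← sqrt_mul (sq_nonneg _), sqrt_sq hW.le]
  congr 1
  field_simp

theorem sum_mul_exp_neg_half_infoDen_lt_one [Fintype 𝒴] [Nonempty 𝒳]
    (hpX : ∀ x, 0 < pX x) (hpX1 : ∑ x, pX x = 1)
    (hW : ∀ x y, 0 < W x y) (hW1 : ∀ x, ∑ y, W x y = 1)
    (hC : 0 < ∑ x, ∑ y, pX x * W x y * infoDen pX W x y) :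
    ∑ x, ∑ y, pX x * W x y * exp (-(1 / 2) * infoDen pX W x y) < 1 := by
  have hP := outDist_pos hpX hW
  have hP0 y : 0 ≤ outDist pX W y := (hP y).le
  have hP1 := sum_outDist hpX1 hW1
  obtain ⟨x₀, hx₀⟩ : ∃ x, ∃ y, W x y ≠ outDist pX W y := exists_ne_outDist hC
  calc ∑ x, ∑ y, pX x * W x y * exp (-(1 / 2) * infoDen pX W x y)
      = ∑ x, pX x * ∑ y, √(W x y * outDist pX W y) := by
        simp only [mul_sum, mul_assoc, mul_exp_neg_half_infoDen (hW _ _) (hP _)]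
    _ < ∑ x, pX x * 1 := by
        refine sum_lt_sum (fun x _ => ?_) ⟨x₀, mem_univ _, ?_⟩
        · exact mul_le_mul_of_nonneg_left
            (sum_sqrt_mul_le_one (fun y => (hW x y).le) hP0 (hW1 x) hP1) (hpX x).le
        · exact mul_lt_mul_of_pos_left
            (sum_sqrt_mul_lt_one (fun y => (hW x₀ y).le) hP0 (hW1 x₀) hP1 hx₀) (hpX x₀)
    _ = 1 := by simp [hpX1]

end Channel

section Chernoff

variable {Ω : Type*} [MeasurableSpace Ω] {μ : Measure Ω}

theorem exp_neg_max_zero_le_exp_mul {t : ℝ} (ht₀ : t ≤ 0) (ht₁ : -1 ≤ t) (s : ℝ) :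
    exp (-max s 0) ≤ exp (t * s) := by
  refine exp_le_exp.2 ?_
  rcases le_total s 0 with hs | hs
  · rw [max_eq_right hs]; nlinarith
  · rw [max_eq_left hs]; nlinarith

variable {Z : ℕ → Ω → ℝ} {t ρ : ℝ}

theorem integral_exp_neg_max_sum_le_pow (hZ : iIndepFun Z μ) (hZm : ∀ k, Measurable (Z k))
    (ht₀ : t ≤ 0) (ht₁ : -1 ≤ t) (hint : ∀ k, Integrable (fun ω => exp (t * Z k ω)) μ)
    (hmgf : ∀ k, mgf (Z k) μ t = ρ) (n : ℕ) :
    ∫ ω, exp (-max (∑ k ∈ range n, Z k ω) 0) ∂μ ≤ ρ ^ n := by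
  have := hZ.isProbabilityMeasure
  have hintS := hZ.integrable_exp_mul_sum hZm (s := range n) fun k _ => hint k
  calc ∫ ω, exp (-max (∑ k ∈ range n, Z k ω) 0) ∂μ ≤ mgf (∑ k ∈ range n, Z k) μ t :=
        integral_mono_of_nonneg (.of_forall fun _ => (exp_pos _).le) hintS (.of_forall fun ω => by
          simp only [Finset.sum_apply]; exact exp_neg_max_zero_le_exp_mul ht₀ ht₁ _)
    _ = ρ ^ n := by rw [hZ.mgf_sum hZm, prod_congr rfl fun k _ => hmgf k, prod_const, card_range]

theorem summable_integral_exp_neg_max_sum (hZ : iIndepFun Z μ) (hZm : ∀ k, Measurable (Z k))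
    (ht₀ : t ≤ 0) (ht₁ : -1 ≤ t) (hint : ∀ k, Integrable (fun ω => exp (t * Z k ω)) μ)
    (hmgf : ∀ k, mgf (Z k) μ t = ρ) (hρ : ρ < 1) :
    Summable fun n => ∫ ω, exp (-max (∑ k ∈ range n, Z k ω) 0) ∂μ :=
  .of_nonneg_of_le (fun _ => integral_nonneg fun _ => (exp_pos _).le)
    (integral_exp_neg_max_sum_le_pow hZ hZm ht₀ ht₁ hint hmgf)
    (summable_geometric_of_lt_one (hmgf 0 ▸ mgf_nonneg) hρ)

end Chernoff

section FiniteValued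

variable {Ω α : Type*} [MeasurableSpace Ω] {μ : Measure Ω} [IsFiniteMeasure μ]
  [Fintype α] [MeasurableSpace α] [DiscreteMeasurableSpace α] {V : Ω → α}

theorem integral_comp_eq_sum_measureReal_preimage (hV : Measurable V) (g : α → ℝ) :
    ∫ ω, g (V ω) ∂μ = ∑ a, μ.real (V ⁻¹' {a}) * g a := by
  rw [← integral_map hV.aemeasurable (measurable_of_countable g).aestronglyMeasurable,
    integral_fintype .of_finite]
  simp [map_measureReal_apply hV (measurableSet_singleton _)]

end FiniteValued

theorem stmt6_general {𝒳 𝒴 : Type*} [Fintype 𝒳] [Nonempty 𝒳] [Fintype 𝒴]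
    [MeasurableSpace 𝒳] [DiscreteMeasurableSpace 𝒳]
    [MeasurableSpace 𝒴] [DiscreteMeasurableSpace 𝒴]
    (pX : 𝒳 → ℝ) (hpXpos : ∀ x, 0 < pX x) (hpXsum : ∑ x, pX x = 1)
    (W : 𝒳 → 𝒴 → ℝ) (hWpos : ∀ x y, 0 < W x y) (hWsum : ∀ x, ∑ y, W x y = 1)
    -- `P_{XY} ≠ P_X ⊗ P_Y`, equivalently `C = E[i(X₁;Y₁)] > 0`:
    (hC : 0 < ∑ x, ∑ y, pX x * W x y * infoDen pX W x y)
    {Ω : Type*} [MeasurableSpace Ω] (μ : Measure Ω) [IsProbabilityMeasure μ]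
    (X : ℕ → Ω → 𝒳) (Y : ℕ → Ω → 𝒴)
    (hXm : ∀ k, Measurable (X k)) (hYm : ∀ k, Measurable (Y k))
    -- `((X_k, Y_k))_k` is an i.i.d. sequence with law `P_{XY}`:
    (hXYindep : iIndepFun (fun k ω => (X k ω, Y k ω)) μ)
    (hXYlaw : ∀ k x y, μ {ω | X k ω = x ∧ Y k ω = y} = ENNReal.ofReal (pX x * W x y)) :
    ∃ a₃ : ℝ,
      Summable (fun n : ℕ =>
        ∫ ω, Real.exp (-(max (∑ k ∈ Finset.range (n + 1), infoDen pX W (X k ω) (Y k ω)) 0)) ∂μ)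
      ∧ ∑' n : ℕ,
          (∫ ω, Real.exp
            (-(max (∑ k ∈ Finset.range (n + 1), infoDen pX W (X k ω) (Y k ω)) 0)) ∂μ) ≤ a₃ := by
  set V : ℕ → Ω → 𝒳 × 𝒴 := fun k ω => (X k ω, Y k ω)
  set i : 𝒳 × 𝒴 → ℝ := fun p => infoDen pX W p.1 p.2
  have hV k : Measurable (V k) := (hXm k).prodMk (hYm k)
  have hlaw k x y : μ.real (V k ⁻¹' {(x, y)}) = pX x * W x y := by
    rw [measureReal_def, show V k ⁻¹' {(x, y)} = {ω | X k ω = x ∧ Y k ω = y} by ext; simp [V],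
      hXYlaw, ENNReal.toReal_ofReal (mul_pos (hpXpos x) (hWpos x y)).le]
  have hmgf k : mgf (fun ω => i (V k ω)) μ (-(1 / 2)) =
      ∑ x, ∑ y, pX x * W x y * exp (-(1 / 2) * infoDen pX W x y) := by
    simp only [mgf]
    rw [integral_comp_eq_sum_measureReal_preimage (hV k) fun p => exp (-(1 / 2) * i p),
      Fintype.sum_prod_type]
    simp only [hlaw, i]
  have hint k : Integrable (fun ω => exp (-(1 / 2) * i (V k ω))) μ :=
    (Integrable.of_finite (μ := μ.map (V k)) (f := fun p => exp (-(1 / 2) * i p))).comp_measurable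
      (hV k)
  have hsummable := summable_integral_exp_neg_max_sum (Z := fun k ω => i (V k ω))
    (hXYindep.comp (fun _ => i) fun _ => measurable_of_countable i)
    (fun k => (measurable_of_countable i).comp (hV k)) (by norm_num) (by norm_num) hint hmgf
    (sum_mul_exp_neg_half_infoDen_lt_one hpXpos hpXsum hWpos hWsum hC)
  exact ⟨_, (summable_nat_add_iff 1).2 hsummable, le_rfl⟩

/-- The series `Σ_{n≥1} E[exp(−[Sₙ]⁺)]` converges, i.e. there is a
finite constant `a₃` with `Σ_{n=1}^∞ E[exp(−[Sₙ]⁺)] ≤ a₃`. -/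
theorem stmt6 {𝒳 𝒴 : Type*} [Fintype 𝒳] [Nonempty 𝒳] [Fintype 𝒴] [Nonempty 𝒴]
    [MeasurableSpace 𝒳] [DiscreteMeasurableSpace 𝒳]
    [MeasurableSpace 𝒴] [DiscreteMeasurableSpace 𝒴]
    (pX : 𝒳 → ℝ) (hpXpos : ∀ x, 0 < pX x) (hpXsum : ∑ x, pX x = 1)
    (W : 𝒳 → 𝒴 → ℝ) (hWpos : ∀ x y, 0 < W x y) (hWsum : ∀ x, ∑ y, W x y = 1)
    -- `P_{XY} ≠ P_X ⊗ P_Y`, equivalently `C = E[i(X₁;Y₁)] > 0`: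
    (hC : 0 < ∑ x, ∑ y, pX x * W x y * infoDen pX W x y)
    {Ω : Type*} [MeasurableSpace Ω] (μ : Measure Ω) [IsProbabilityMeasure μ]
    (X : ℕ → Ω → 𝒳) (Y : ℕ → Ω → 𝒴)
    (hXm : ∀ k, Measurable (X k)) (hYm : ∀ k, Measurable (Y k))
    -- `((X_k, Y_k))_k` is an i.i.d. sequence with law `P_{XY}`:
    (hXYindep : iIndepFun (fun k ω => (X k ω, Y k ω)) μ)
    (hXYlaw : ∀ k x y, μ {ω | X k ω = x ∧ Y k ω = y} = ENNReal.ofReal (pX x * W x y)) :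
    ∃ a₃ : ℝ,
      Summable (fun n : ℕ =>
        ∫ ω, Real.exp (-(max (∑ k ∈ Finset.range (n + 1), infoDen pX W (X k ω) (Y k ω)) 0)) ∂μ)
      ∧ ∑' n : ℕ,
          (∫ ω, Real.exp
            (-(max (∑ k ∈ Finset.range (n + 1), infoDen pX W (X k ω) (Y k ω)) 0)) ∂μ) ≤ a₃ :=
  stmt6_general pX hpXpos hpXsum W hWpos hWsum hC μ X Y hXm hYm hXYindep hXYlaw
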